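/- arXiv:2012.00268 — 3 statements merged into one kernel-verified Lean document; each statement's English description precedes it below -/
import Mathlib

section
/- Let m_B, m_E be positive integers, K_B, K_E > 0, ρ_B, ρ_E > 0 real, and R_s ≥ 1 real. Let F_B = F_{m_B,K_B,ρ_B} be the integer-parameter Rician shadowed CDF of the main channel and f_E = f_{m_E,K_E,ρ_E} the integer-parameter Rician shadowed PDF of the eavesdropper channel. Then ∫₀^∞ F_B(R_s·γ + R_s − 1)·f_E(γ) dγ = Σ_{l=0}^{m_B−1} Σ_{n=0}^{m_E−1} B_l(m_B,K_B)·B_n(m_E,K_E)·( 1 − exp(−(R_s−1)/ρ_B) · Σ_{k=0}^{m_B−l−1} Σ_{t=0}^{k} [ (R_s−1)^t · R_s^{k−t} · (m_E−n+k−t−1)! ] / [ ρ_B^k · ρ_E^{m_E−n} · t! · (k−t)! · (m_E−n−1)! ] · (1/ρ_E + R_s/ρ_B)^{−(m_E−n+k−t)} ). -/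
open MeasureTheory Filter Finset Real

/-- Coefficients `B_n(m,K)` of the integer-parameter Rician shadowed model. -/
noncomputable def Bcoef (m : ℕ) (K : ℝ) (n : ℕ) : ℝ :=
  ((m - 1).choose n : ℝ) * ((m : ℝ) / (K + m)) ^ n * (K / (K + m)) ^ (m - 1 - n)

/-- Integer-parameter Rician shadowed PDF with parameters `(m, K, ρ)`. -/
noncomputable def rsPDF (m : ℕ) (K ρ : ℝ) (γ : ℝ) : ℝ :=
  ∑ n ∈ Finset.range m,
    Bcoef m K n * γ ^ (m - n - 1) * Real.exp (-γ / ρ) /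
      (ρ ^ (m - n) * ((m - n - 1).factorial : ℝ))

/-- Integer-parameter Rician shadowed CDF with parameters `(m, K, ρ)`. -/
noncomputable def rsCDF (m : ℕ) (K ρ : ℝ) (γ : ℝ) : ℝ :=
  ∑ j ∈ Finset.range m,
    Bcoef m K j *
      (1 - Real.exp (-γ / ρ) *
        ∑ k ∈ Finset.range (m - j), γ ^ k / (ρ ^ k * (k.factorial : ℝ)))

/-- Alternate Rician Shadowed (ARS) PDF with parameters `(p, m, K₁, K₂, ρ₁, ρ₂)`. -/
noncomputable def arsPDF (p : ℝ) (m : ℕ) (K₁ K₂ ρ₁ ρ₂ : ℝ) (γ : ℝ) : ℝ :=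
  p * rsPDF m K₁ ρ₁ γ + (1 - p) * rsPDF m K₂ ρ₂ γ

/-- Alternate Rician Shadowed (ARS) CDF with parameters `(p, m, K₁, K₂, ρ₁, ρ₂)`. -/
noncomputable def arsCDF (p : ℝ) (m : ℕ) (K₁ K₂ ρ₁ ρ₂ : ℝ) (γ : ℝ) : ℝ :=
  p * rsCDF m K₁ ρ₁ γ + (1 - p) * rsCDF m K₂ ρ₂ γ

/-!
The integer-parameter Rician shadowed law is a finite `Bcoef`-mixture of Erlang laws, so the
integral splits into one integral per pair of Erlang components. For such a pair, the Erlang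
distribution function evaluated at `Rs γ + Rs - 1` is one minus an exponential times a
polynomial in `Rs γ + Rs - 1`; expanding that polynomial binomially leaves only integrals
`∫₀^∞ γ^a e^{-cγ} dγ = a! / c^(a+1)` with `c = 1/ρE + Rs/ρB`.
-/

open Set
open scoped Nat

lemma add_pow_div_factorial {𝕜 : Type*} [Field 𝕜] [CharZero 𝕜] (x y : 𝕜) (k : ℕ) :
    (x + y) ^ k / k ! = ∑ t ∈ range (k + 1), x ^ t / t ! * (y ^ (k - t) / (k - t)!) := by
  rw [add_pow, sum_div]
  refine sum_congr rfl fun t ht => ?_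
  have htk : t ≤ k := Nat.lt_succ_iff.mp (mem_range.mp ht)
  have : (k.choose t : 𝕜) ≠ 0 := by exact_mod_cast (Nat.choose_pos htk).ne'
  rw [← Nat.choose_mul_factorial_mul_factorial htk]
  push_cast
  field_simp

lemma integrableOn_pow_mul_exp_neg_mul (a : ℕ) {c : ℝ} (hc : 0 < c) :
    IntegrableOn (fun γ : ℝ => γ ^ a * exp (-(c * γ))) (Ioi 0) := by
  have h := integrableOn_rpow_mul_exp_neg_mul_rpow (s := a) (p := 1)
    (neg_one_lt_zero.trans_le a.cast_nonneg) one_pos hc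
  simpa only [rpow_natCast, rpow_one, neg_mul] using h

lemma integral_pow_mul_exp_neg_mul (a : ℕ) {c : ℝ} (hc : 0 < c) :
    ∫ γ in Ioi (0 : ℝ), γ ^ a * exp (-(c * γ)) = a ! / c ^ (a + 1) := by
  have h := integral_rpow_mul_exp_neg_mul_Ioi (a := a + 1) (by positivity) hc
  rw [add_sub_cancel_right, Gamma_nat_eq_factorial, ← Nat.cast_succ, rpow_natCast, one_div_pow,
    one_div_mul_eq_div] at h
  simpa only [rpow_natCast] using h

-- Erlang laws with integer shape `p` (resp. `q`) and scale `ρ`.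
noncomputable def erlangPDF (p : ℕ) (ρ γ : ℝ) : ℝ :=
  γ ^ (p - 1) * exp (-γ / ρ) / (ρ ^ p * (p - 1)!)

noncomputable def erlangCDF (q : ℕ) (ρ γ : ℝ) : ℝ :=
  1 - exp (-γ / ρ) * ∑ k ∈ range q, γ ^ k / (ρ ^ k * k !)

lemma rsPDF_eq_sum_erlangPDF (m : ℕ) (K ρ γ : ℝ) :
    rsPDF m K ρ γ = ∑ n ∈ range m, Bcoef m K n * erlangPDF (m - n) ρ γ := by
  simp only [rsPDF, erlangPDF, mul_div_assoc, mul_assoc]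

lemma rsCDF_eq_sum_erlangCDF (m : ℕ) (K ρ γ : ℝ) :
    rsCDF m K ρ γ = ∑ j ∈ range m, Bcoef m K j * erlangCDF (m - j) ρ γ :=
  rfl

lemma erlangPDF_eq (p : ℕ) (ρ γ : ℝ) :
    erlangPDF p ρ γ = (ρ ^ p * (p - 1)!)⁻¹ * (γ ^ (p - 1) * exp (-(1 / ρ * γ))) := by
  rw [erlangPDF, div_eq_inv_mul]
  ring_nf

lemma integrableOn_erlangPDF (p : ℕ) {ρ : ℝ} (hρ : 0 < ρ) :
    IntegrableOn (erlangPDF p ρ) (Ioi 0) := by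
  simp_rw [funext (erlangPDF_eq p ρ)]
  exact (integrableOn_pow_mul_exp_neg_mul _ (one_div_pos.mpr hρ)).const_mul _

lemma integral_erlangPDF {p : ℕ} (hp : 0 < p) {ρ : ℝ} (hρ : 0 < ρ) :
    ∫ γ in Ioi 0, erlangPDF p ρ γ = 1 := by
  simp_rw [erlangPDF_eq, integral_const_mul, integral_pow_mul_exp_neg_mul _ (one_div_pos.mpr hρ),
    Nat.sub_add_cancel hp]
  rw [one_div_pow]
  field_simp

lemma erlangCDF_affine_mul_erlangPDF (p q : ℕ) (ρB ρE u v γ : ℝ) :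
    erlangCDF q ρB (v * γ + u) * erlangPDF p ρE γ =
      erlangPDF p ρE γ - exp (-u / ρB) * ∑ k ∈ range q, ∑ t ∈ range (k + 1),
        u ^ t * v ^ (k - t) / (ρB ^ k * ρE ^ p * t ! * (k - t)! * (p - 1)!) *
          (γ ^ (p - 1 + (k - t)) * exp (-((1 / ρE + v / ρB) * γ))) := by
  have hexp : exp (-(v * γ + u) / ρB) = exp (-u / ρB) * exp (-(v / ρB * γ)) := by
    rw [← exp_add]; ring_nf
  have hexp' : exp (-((1 / ρE + v / ρB) * γ)) = exp (-γ / ρE) * exp (-(v / ρB * γ)) := by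
    rw [← exp_add]; ring_nf
  rw [erlangCDF, sub_mul, one_mul, hexp, mul_sum, mul_sum, sum_mul]
  congr 1
  refine sum_congr rfl fun k _ => ?_
  rw [mul_comm (ρB ^ k), ← div_div, add_comm, add_pow_div_factorial, sum_div, mul_sum, mul_sum,
    sum_mul]
  refine sum_congr rfl fun t _ => ?_
  rw [erlangPDF, hexp', pow_add, mul_pow]
  ring

section AffineErlangPair

variable {p : ℕ} (q : ℕ) {ρB ρE u v : ℝ}

lemma integrableOn_erlangCDF_affine_mul_erlangPDF (hρE : 0 < ρE) (hc : 0 < 1 / ρE + v / ρB) :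
    IntegrableOn (fun γ => erlangCDF q ρB (v * γ + u) * erlangPDF p ρE γ) (Ioi 0) := by
  simp_rw [erlangCDF_affine_mul_erlangPDF]
  refine (integrableOn_erlangPDF p hρE).sub (Integrable.const_mul ?_ _)
  exact integrable_finsetSum _ fun k _ => integrable_finsetSum _ fun t _ =>
    (integrableOn_pow_mul_exp_neg_mul _ hc).const_mul _

lemma integral_erlangCDF_affine_mul_erlangPDF (hp : 0 < p) (hρE : 0 < ρE)
    (hc : 0 < 1 / ρE + v / ρB) :
    ∫ γ in Ioi 0, erlangCDF q ρB (v * γ + u) * erlangPDF p ρE γ =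
      1 - exp (-u / ρB) * ∑ k ∈ range q, ∑ t ∈ range (k + 1),
        u ^ t * v ^ (k - t) * ((p + k - t - 1)! : ℝ) /
            (ρB ^ k * ρE ^ p * t ! * (k - t)! * (p - 1)!) *
          (1 / ρE + v / ρB) ^ (-((p + k - t : ℕ) : ℤ)) := by
  have hmonomial : ∀ a : ℕ, IntegrableOn (fun γ => γ ^ a * exp (-((1 / ρE + v / ρB) * γ)))
      (Ioi 0) := fun a => integrableOn_pow_mul_exp_neg_mul a hc
  simp_rw [erlangCDF_affine_mul_erlangPDF]
  rw [integral_sub (integrableOn_erlangPDF p hρE) ((integrable_finsetSum _ fun k _ =>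
      integrable_finsetSum _ fun t _ => (hmonomial _).const_mul _).const_mul _),
    integral_erlangPDF hp hρE, integral_const_mul,
    integral_finsetSum _ fun k _ => integrable_finsetSum _ fun t _ => (hmonomial _).const_mul _]
  congr 2
  refine sum_congr rfl fun k _ => ?_
  rw [integral_finsetSum _ fun t _ => (hmonomial _).const_mul _]
  refine sum_congr rfl fun t ht => ?_
  have htk : t ≤ k := Nat.lt_succ_iff.mp (mem_range.mp ht)
  rw [integral_const_mul, integral_pow_mul_exp_neg_mul _ hc,
    show p - 1 + (k - t) = p + k - t - 1 by omega, show p + k - t - 1 + 1 = p + k - t by omega,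
    zpow_neg, zpow_natCast]
  ring

end AffineErlangPair

theorem sop_branch_pair_general (mB mE : ℕ)
    (KB KE ρB ρE : ℝ) (hρB : 0 < ρB) (hρE : 0 < ρE)
    (Rs : ℝ) (hRs : 1 ≤ Rs) :
    ∫ γ in Set.Ioi (0 : ℝ), rsCDF mB KB ρB (Rs * γ + Rs - 1) * rsPDF mE KE ρE γ =
      ∑ l ∈ Finset.range mB, ∑ n ∈ Finset.range mE,
        Bcoef mB KB l * Bcoef mE KE n *
          (1 - Real.exp (-(Rs - 1) / ρB) *
            ∑ k ∈ Finset.range (mB - l), ∑ t ∈ Finset.range (k + 1),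
              (Rs - 1) ^ t * Rs ^ (k - t) * ((mE - n + k - t - 1).factorial : ℝ) /
                  (ρB ^ k * ρE ^ (mE - n) * (t.factorial : ℝ) *
                    ((k - t).factorial : ℝ) * ((mE - n - 1).factorial : ℝ)) *
                (1 / ρE + Rs / ρB) ^ (-((mE - n + k - t : ℕ) : ℤ))) := by
  have hc : 0 < 1 / ρE + Rs / ρB :=
    add_pos_of_pos_of_nonneg (one_div_pos.mpr hρE) (div_nonneg (by linarith) hρB.le)
  have hpair (l n : ℕ) := (integrableOn_erlangCDF_affine_mul_erlangPDF (mB - l) (u := Rs - 1)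
    (p := mE - n) hρE hc).const_mul (Bcoef mB KB l * Bcoef mE KE n)
  simp_rw [rsCDF_eq_sum_erlangCDF, rsPDF_eq_sum_erlangPDF, sum_mul_sum, add_sub_assoc,
    mul_mul_mul_comm _ (erlangCDF _ _ _)]
  rw [integral_finsetSum _ fun l _ => integrable_finsetSum _ fun n _ => hpair l n]
  refine sum_congr rfl fun l _ => ?_
  rw [integral_finsetSum _ fun n _ => hpair l n]
  refine sum_congr rfl fun n hn => ?_
  rw [integral_const_mul, integral_erlangCDF_affine_mul_erlangPDF _
    (Nat.sub_pos_of_lt (mem_range.mp hn)) hρE hc]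

/-- One branch pair of the closed-form secrecy outage probability (integer `m`). -/
theorem sop_branch_pair (mB mE : ℕ) (hmB : 0 < mB) (hmE : 0 < mE)
    (KB KE ρB ρE : ℝ) (hKB : 0 < KB) (hKE : 0 < KE) (hρB : 0 < ρB) (hρE : 0 < ρE)
    (Rs : ℝ) (hRs : 1 ≤ Rs) :
    ∫ γ in Set.Ioi (0 : ℝ), rsCDF mB KB ρB (Rs * γ + Rs - 1) * rsPDF mE KE ρE γ =
      ∑ l ∈ Finset.range mB, ∑ n ∈ Finset.range mE,
        Bcoef mB KB l * Bcoef mE KE n *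
          (1 - Real.exp (-(Rs - 1) / ρB) *
            ∑ k ∈ Finset.range (mB - l), ∑ t ∈ Finset.range (k + 1),
              (Rs - 1) ^ t * Rs ^ (k - t) * ((mE - n + k - t - 1).factorial : ℝ) /
                  (ρB ^ k * ρE ^ (mE - n) * (t.factorial : ℝ) *
                    ((k - t).factorial : ℝ) * ((mE - n - 1).factorial : ℝ)) *
                (1 / ρE + Rs / ρB) ^ (-((mE - n + k - t : ℕ) : ℤ))) :=
  sop_branch_pair_general mB mE KB KE ρB ρE hρB hρE Rs hRs
end

section
/- Let m_B, m_E be positive integers, K_{B,1}, K_{B,2}, K_{E,1}, K_{E,2} > 0, ρ_{E,1}, ρ_{E,2} > 0, c₁, c₂ > 0 real, and p_B, p_E ∈ [0,1]. For s > 0, let f_B^{(s)} be the ARS PDF with parameters (p_B, m_B, K_{B,1}, K_{B,2}, c₁·s, c₂·s) and let F_E^{ARS} be the ARS CDF with parameters (p_E, m_E, K_{E,1}, K_{E,2}, ρ_{E,1}, ρ_{E,2}). Then the probability of non-zero secrecy capacity P_nz(s) = ∫₀^∞ F_E^{ARS}(γ)·f_B^{(s)}(γ) dγ satisfies lim_{s→∞}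 P_nz(s) = 1. -/
/-! Substituting `γ = s * u` turns `P_nz(s)` into `∫₀^∞ F_E(s u) f_B(u) du`, where `f_B` is the
main-channel ARS density with scale parameters `c₁, c₂`. Being continuous with limit `1` at
infinity, `F_E` is bounded on `[0, ∞)`, so dominated convergence sends the integral to
`∫₀^∞ f_B = 1`. -/

open MeasureTheory Filter Finset Real

open Set

lemma Continuous.exists_bound_Ici_of_tendsto {E : Type*} [NormedAddCommGroup E] {f : ℝ → E}
    {L : E} (hf : Continuous f) (hlim : Tendsto f atTop (nhds L)) (a : ℝ) :
    ∃ C, ∀ x ∈ Ici a, ‖f x‖ ≤ C := by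
  obtain ⟨R, hR⟩ := eventually_atTop.1 <|
    hlim.norm.eventually (eventually_le_nhds (lt_add_one ‖L‖))
  obtain ⟨C, hC⟩ := isCompact_Icc.exists_bound_of_continuousOn (hf.continuousOn (s := Icc a R))
  refine ⟨max C (‖L‖ + 1), fun x hx => ?_⟩
  rcases le_total x R with hxR | hRx
  · exact (hC x ⟨hx, hxR⟩).trans (le_max_left _ _)
  · exact (hR x hRx).trans (le_max_right _ _)

theorem tendsto_setIntegral_comp_mul_mul_Ioi {F g : ℝ → ℝ} {L : ℝ} (hF : Continuous F)
    (hFlim : Tendsto F atTop (nhds L)) (hg : IntegrableOn g (Ioi 0)) :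
    Tendsto (fun s => ∫ u in Ioi 0, F (s * u) * g u) atTop
      (nhds (L * ∫ u in Ioi 0, g u)) := by
  obtain ⟨C, hC⟩ := hF.exists_bound_Ici_of_tendsto hFlim 0
  rw [← integral_const_mul]
  refine tendsto_integral_filter_of_dominated_convergence (fun u => C * ‖g u‖)
    (Eventually.of_forall fun s =>
      ((hF.comp (continuous_const_mul s)).aestronglyMeasurable).mul hg.aestronglyMeasurable)
    ?_ (hg.norm.const_mul C) ?_
  · filter_upwards [eventually_ge_atTop 0] with s hs
    filter_upwards [ae_restrict_mem measurableSet_Ioi] with u hu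
    rw [norm_mul]
    exact mul_le_mul_of_nonneg_right (hC _ (mul_nonneg hs hu.le)) (norm_nonneg _)
  · filter_upwards [ae_restrict_mem measurableSet_Ioi] with u hu
    exact (hFlim.comp (tendsto_id.atTop_mul_const hu)).mul_const (g u)

theorem setIntegral_Ioi_mul_eq_of_scale {F g h : ℝ → ℝ} {s : ℝ} (hs : 0 < s)
    (hscale : ∀ u, h (s * u) = s⁻¹ * g u) :
    ∫ γ in Ioi 0, F γ * h γ = ∫ u in Ioi 0, F (s * u) * g u := by
  have hsub := integral_comp_mul_left_Ioi (fun γ => F γ * h γ) 0 hs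
  simp only [hscale, mul_zero, smul_eq_mul] at hsub
  simp only [mul_left_comm _ s⁻¹, integral_const_mul] at hsub
  exact (mul_left_cancel₀ (inv_ne_zero hs.ne') hsub).symm

lemma tendsto_exp_neg_mul_sum_pow_div_factorial (n : ℕ) :
    Tendsto (fun x => exp (-x) * ∑ k ∈ range n, x ^ k / k.factorial) atTop (nhds 0) := by
  simp only [mul_sum]
  simpa using tendsto_finsetSum (range n) fun k _ =>
    ((tendsto_pow_mul_exp_neg_atTop_nhds_zero k).div_const (k.factorial : ℝ)).congr
      fun x => by ring

lemma integral_pow_mul_exp_neg_div_Ioi {ρ : ℝ} (hρ : 0 < ρ) (a : ℕ) :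
    ∫ x in Ioi 0, x ^ a * exp (-x / ρ) = ρ ^ (a + 1) * a.factorial := by
  have h := integral_rpow_mul_exp_neg_mul_Ioi (a := a + 1) (r := ρ⁻¹) (by positivity)
    (by positivity)
  simp only [add_sub_cancel_right, rpow_natCast, one_div, inv_inv] at h
  rw [Gamma_nat_eq_factorial, ← Nat.cast_succ, rpow_natCast] at h
  rw [← h]
  refine setIntegral_congr_fun measurableSet_Ioi fun x _ => ?_
  rw [neg_div, div_eq_inv_mul]

lemma integrableOn_pow_mul_exp_neg_div_Ioi {ρ : ℝ} (hρ : 0 < ρ) (a : ℕ) :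
    IntegrableOn (fun x : ℝ => x ^ a * exp (-x / ρ)) (Ioi 0) := by
  refine (integrableOn_rpow_mul_exp_neg_mul_rpow (s := a) (p := 1) (b := ρ⁻¹)
    (by linarith [a.cast_nonneg (α := ℝ)]) one_pos (by positivity)).congr_fun
    (fun x _ => ?_) measurableSet_Ioi
  simp only [rpow_natCast, rpow_one, div_eq_inv_mul, neg_mul, mul_neg]

lemma sum_Bcoef {m : ℕ} (hm : 0 < m) {K : ℝ} (hK : K + m ≠ 0) :
    ∑ n ∈ range m, Bcoef m K n = 1 := by
  have hsum : (m : ℝ) / (K + m) + K / (K + m) = 1 := by field_simp; ring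
  have hbinom := add_pow ((m : ℝ) / (K + m)) (K / (K + m)) (m - 1)
  rw [hsum, one_pow, Nat.sub_add_cancel hm] at hbinom
  rw [hbinom]
  exact sum_congr rfl fun n _ => by unfold Bcoef; ring

lemma rsPDF_summand_eq_const_mul (m : ℕ) (K ρ : ℝ) (n : ℕ) (γ : ℝ) :
    Bcoef m K n * γ ^ (m - n - 1) * exp (-γ / ρ) / (ρ ^ (m - n) * (m - n - 1).factorial) =
      Bcoef m K n / (ρ ^ (m - n) * (m - n - 1).factorial) *
        (γ ^ (m - n - 1) * exp (-γ / ρ)) := by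
  ring

lemma integrableOn_rsPDF (m : ℕ) (K : ℝ) {ρ : ℝ} (hρ : 0 < ρ) :
    IntegrableOn (rsPDF m K ρ) (Ioi 0) := by
  unfold rsPDF
  simp only [rsPDF_summand_eq_const_mul]
  exact integrable_finsetSum _ fun n _ =>
    (integrableOn_pow_mul_exp_neg_div_Ioi hρ _).const_mul _

lemma integral_rsPDF {m : ℕ} (hm : 0 < m) {K ρ : ℝ} (hK : K + m ≠ 0) (hρ : 0 < ρ) :
    ∫ γ in Ioi 0, rsPDF m K ρ γ = 1 := by
  unfold rsPDF
  simp only [rsPDF_summand_eq_const_mul]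
  rw [integral_finsetSum _ fun n _ => (integrableOn_pow_mul_exp_neg_div_Ioi hρ _).const_mul _,
    ← sum_Bcoef hm hK]
  refine sum_congr rfl fun n hn => ?_
  have hmn : m - n - 1 + 1 = m - n := by have := mem_range.1 hn; omega
  rw [integral_const_mul, integral_pow_mul_exp_neg_div_Ioi hρ, hmn]
  field_simp

lemma rsPDF_mul_scale (m : ℕ) (K c : ℝ) {s : ℝ} (hs : s ≠ 0) (u : ℝ) :
    rsPDF m K (c * s) (s * u) = s⁻¹ * rsPDF m K c u := by
  unfold rsPDF
  rw [mul_sum]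
  refine sum_congr rfl fun n hn => ?_
  obtain ⟨a, ha⟩ : ∃ a, m - n = a + 1 := ⟨m - n - 1, by have := mem_range.1 hn; omega⟩
  have harg : -(s * u) / (c * s) = -u / c := by
    rw [mul_comm c s, ← mul_neg, mul_div_mul_left _ _ hs]
  rw [ha, Nat.add_sub_cancel, harg, mul_pow, mul_pow]
  field_simp
  ring

@[fun_prop]
lemma continuous_rsCDF (m : ℕ) (K ρ : ℝ) : Continuous (rsCDF m K ρ) := by
  unfold rsCDF
  fun_prop

lemma tendsto_rsCDF_atTop {m : ℕ} (hm : 0 < m) {K ρ : ℝ} (hK : K + m ≠ 0) (hρ : 0 < ρ) :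
    Tendsto (rsCDF m K ρ) atTop (nhds 1) := by
  have htail : ∀ j, Tendsto (fun γ => exp (-γ / ρ) *
      ∑ k ∈ range (m - j), γ ^ k / (ρ ^ k * k.factorial)) atTop (nhds 0) := fun j => by
    simpa only [Function.comp_def, id_eq, neg_div, div_pow, div_div] using
      (tendsto_exp_neg_mul_sum_pow_div_factorial (m - j)).comp (tendsto_id.atTop_div_const hρ)
  have hsum := tendsto_finsetSum (range m) fun j _ =>
    ((htail j).const_sub 1).const_mul (Bcoef m K j)
  simp only [sub_zero, mul_one, sum_Bcoef hm hK] at hsum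
  exact hsum

lemma integrableOn_arsPDF (p : ℝ) (m : ℕ) (K₁ K₂ : ℝ) {ρ₁ ρ₂ : ℝ} (hρ₁ : 0 < ρ₁)
    (hρ₂ : 0 < ρ₂) : IntegrableOn (arsPDF p m K₁ K₂ ρ₁ ρ₂) (Ioi 0) :=
  ((integrableOn_rsPDF m K₁ hρ₁).const_mul p).add ((integrableOn_rsPDF m K₂ hρ₂).const_mul _)

lemma integral_arsPDF (p : ℝ) {m : ℕ} (hm : 0 < m) {K₁ K₂ ρ₁ ρ₂ : ℝ} (hK₁ : K₁ + m ≠ 0)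
    (hK₂ : K₂ + m ≠ 0) (hρ₁ : 0 < ρ₁) (hρ₂ : 0 < ρ₂) :
    ∫ γ in Ioi 0, arsPDF p m K₁ K₂ ρ₁ ρ₂ γ = 1 := by
  unfold arsPDF
  rw [integral_add ((integrableOn_rsPDF m K₁ hρ₁).const_mul p)
      ((integrableOn_rsPDF m K₂ hρ₂).const_mul _), integral_const_mul, integral_const_mul,
    integral_rsPDF hm hK₁ hρ₁, integral_rsPDF hm hK₂ hρ₂]
  ring

lemma arsPDF_mul_scale (p : ℝ) (m : ℕ) (K₁ K₂ c₁ c₂ : ℝ) {s : ℝ} (hs : s ≠ 0) (u : ℝ) :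
    arsPDF p m K₁ K₂ (c₁ * s) (c₂ * s) (s * u) = s⁻¹ * arsPDF p m K₁ K₂ c₁ c₂ u := by
  simp only [arsPDF, rsPDF_mul_scale _ _ _ hs]
  ring

lemma continuous_arsCDF (p : ℝ) (m : ℕ) (K₁ K₂ ρ₁ ρ₂ : ℝ) :
    Continuous (arsCDF p m K₁ K₂ ρ₁ ρ₂) := by
  unfold arsCDF
  fun_prop

lemma tendsto_arsCDF_atTop (p : ℝ) {m : ℕ} (hm : 0 < m) {K₁ K₂ ρ₁ ρ₂ : ℝ} (hK₁ : K₁ + m ≠ 0)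
    (hK₂ : K₂ + m ≠ 0) (hρ₁ : 0 < ρ₁) (hρ₂ : 0 < ρ₂) :
    Tendsto (arsCDF p m K₁ K₂ ρ₁ ρ₂) atTop (nhds 1) := by
  have hlim := ((tendsto_rsCDF_atTop hm hK₁ hρ₁).const_mul p).add
    ((tendsto_rsCDF_atTop hm hK₂ hρ₂).const_mul (1 - p))
  rwa [mul_one, mul_one, add_sub_cancel] at hlim

theorem pnz_tendsto_one_general (mB mE : ℕ) (hmB : 0 < mB) (hmE : 0 < mE)
    (KB1 KB2 KE1 KE2 : ℝ) (hKB1 : 0 < KB1) (hKB2 : 0 < KB2)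
    (hKE1 : 0 < KE1) (hKE2 : 0 < KE2)
    (ρE1 ρE2 c1 c2 : ℝ) (hρE1 : 0 < ρE1) (hρE2 : 0 < ρE2)
    (hc1 : 0 < c1) (hc2 : 0 < c2)
    (pB pE : ℝ) :
    Filter.Tendsto
      (fun s : ℝ =>
        ∫ γ in Set.Ioi (0 : ℝ),
          arsCDF pE mE KE1 KE2 ρE1 ρE2 γ *
            arsPDF pB mB KB1 KB2 (c1 * s) (c2 * s) γ)
      Filter.atTop (nhds 1) := by
  have hKm : ∀ {m : ℕ} {K : ℝ}, 0 < K → K + m ≠ 0 := fun hK => by positivity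
  have hlim := tendsto_setIntegral_comp_mul_mul_Ioi (continuous_arsCDF pE mE KE1 KE2 ρE1 ρE2)
    (tendsto_arsCDF_atTop pE hmE (hKm hKE1) (hKm hKE2) hρE1 hρE2)
    (integrableOn_arsPDF pB mB KB1 KB2 hc1 hc2)
  rw [integral_arsPDF pB hmB (hKm hKB1) (hKm hKB2) hc1 hc2, mul_one] at hlim
  refine hlim.congr' ?_
  filter_upwards [eventually_gt_atTop 0] with s hs
  exact (setIntegral_Ioi_mul_eq_of_scale hs (arsPDF_mul_scale _ _ _ _ _ _ hs.ne')).symm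

/-- High-SNR limit: the probability of non-zero secrecy capacity tends to 1
as the average SNR of the main channel grows. -/
theorem pnz_tendsto_one (mB mE : ℕ) (hmB : 0 < mB) (hmE : 0 < mE)
    (KB1 KB2 KE1 KE2 : ℝ) (hKB1 : 0 < KB1) (hKB2 : 0 < KB2)
    (hKE1 : 0 < KE1) (hKE2 : 0 < KE2)
    (ρE1 ρE2 c1 c2 : ℝ) (hρE1 : 0 < ρE1) (hρE2 : 0 < ρE2)
    (hc1 : 0 < c1) (hc2 : 0 < c2)
    (pB pE : ℝ) (hpB : pB ∈ Set.Icc (0 : ℝ) 1) (hpE : pE ∈ Set.Icc (0 : ℝ) 1) :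
    Filter.Tendsto
      (fun s : ℝ =>
        ∫ γ in Set.Ioi (0 : ℝ),
          arsCDF pE mE KE1 KE2 ρE1 ρE2 γ *
            arsPDF pB mB KB1 KB2 (c1 * s) (c2 * s) γ)
      Filter.atTop (nhds 1) :=
  pnz_tendsto_one_general mB mE hmB hmE KB1 KB2 KE1 KE2 hKB1 hKB2 hKE1 hKE2 ρE1 ρE2 c1 c2 hρE1 hρE2
    hc1 hc2 pB pE
end

section
/- Let m_B, m_E be positive integers, K_{B,1}, K_{B,2}, K_{E,1}, K_{E,2} > 0, ρ_{E,1}, ρ_{E,2} > 0, c₁, c₂ > 0 real, and p_B, p_E ∈ [0,1]. For s > 0, let F_B^{(s)} be the ARS CDF with parameters (p_B, m_B, K_{B,1}, K_{B,2}, c₁·s, c₂·s), and let f_E^{ARS} be the ARS PDF with parameters (p_E, m_E, K_{E,1}, K_{E,2}, ρ_{E,1}, ρ_{E,2}). Then I₂(s) = ∫₀^∞ ln(1+γ)·f_E^{ARS}(γ)·F_B^{(s)}(γ) dγ satisfies lim_{s→∞} I₂(s) / log₂(s) = 0. -/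
open MeasureTheory Filter Finset Real

/-!
Since `log (1 + γ) ≤ γ` and every Rician shadowed CDF is bounded by `∑ⱼ |B_j|` whatever its scale,
the integrand of `I₂(s)` is dominated, uniformly in `s`, by a multiple of `γ · |f_E(γ)|`, which is
integrable because `f_E` is a combination of Gamma densities. So `I₂` is bounded while `log₂ s → ∞`.
-/

lemma abs_one_sub_exp_neg_div_mul_sum_le {γ ρ : ℝ} (hγ : 0 ≤ γ) (hρ : 0 < ρ) (N : ℕ) :
    |1 - exp (-γ / ρ) * ∑ k ∈ range N, γ ^ k / (ρ ^ k * (k.factorial : ℝ))| ≤ 1 := by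
  have hsum : ∑ k ∈ range N, γ ^ k / (ρ ^ k * (k.factorial : ℝ)) =
      ∑ k ∈ range N, (γ / ρ) ^ k / (k.factorial : ℝ) :=
    sum_congr rfl fun k _ => by rw [div_pow, div_div]
  have hnonneg : 0 ≤ exp (-γ / ρ) * ∑ k ∈ range N, (γ / ρ) ^ k / (k.factorial : ℝ) :=
    mul_nonneg (exp_pos _).le (sum_nonneg fun k _ => by positivity)
  have hle : exp (-γ / ρ) * ∑ k ∈ range N, (γ / ρ) ^ k / (k.factorial : ℝ) ≤ 1 :=
    calc exp (-γ / ρ) * ∑ k ∈ range N, (γ / ρ) ^ k / (k.factorial : ℝ)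
        ≤ exp (-γ / ρ) * exp (γ / ρ) := by
          gcongr; exact sum_le_exp_of_nonneg (by positivity) N
      _ = 1 := by rw [← exp_add, neg_div, neg_add_cancel, exp_zero]
  rw [hsum, abs_le]
  constructor <;> linarith

lemma abs_rsCDF_le (m : ℕ) (K : ℝ) {ρ γ : ℝ} (hρ : 0 < ρ) (hγ : 0 ≤ γ) :
    |rsCDF m K ρ γ| ≤ ∑ j ∈ range m, |Bcoef m K j| :=
  (abs_sum_le_sum_abs _ _).trans <| sum_le_sum fun j _ => by
    rw [abs_mul]
    exact mul_le_of_le_one_right (abs_nonneg _) (abs_one_sub_exp_neg_div_mul_sum_le hγ hρ _)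

lemma abs_arsCDF_le (p : ℝ) (m : ℕ) (K₁ K₂ : ℝ) {ρ₁ ρ₂ γ : ℝ} (hρ₁ : 0 < ρ₁) (hρ₂ : 0 < ρ₂)
    (hγ : 0 ≤ γ) :
    |arsCDF p m K₁ K₂ ρ₁ ρ₂ γ| ≤
      |p| * ∑ j ∈ range m, |Bcoef m K₁ j| + |1 - p| * ∑ j ∈ range m, |Bcoef m K₂ j| :=
  calc |arsCDF p m K₁ K₂ ρ₁ ρ₂ γ|
      ≤ |p| * |rsCDF m K₁ ρ₁ γ| + |1 - p| * |rsCDF m K₂ ρ₂ γ| := by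
        rw [arsCDF, ← abs_mul, ← abs_mul]; exact abs_add_le _ _
    _ ≤ _ := by gcongr <;> exact abs_rsCDF_le _ _ ‹_› hγ

lemma integrableOn_pow_mul_exp_neg_div (n : ℕ) {ρ : ℝ} (hρ : 0 < ρ) :
    IntegrableOn (fun x : ℝ => x ^ n * exp (-x / ρ)) (Set.Ioi 0) := by
  refine (integrableOn_rpow_mul_exp_neg_mul_rpow (s := n) (p := 1) (b := 1 / ρ)
    (by linarith [n.cast_nonneg (α := ℝ)]) one_pos (by positivity)).congr_fun
    (fun x _ => ?_) measurableSet_Ioi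
  simp only [rpow_one, rpow_natCast]
  ring_nf

lemma integrableOn_mul_rsPDF (m : ℕ) (K : ℝ) {ρ : ℝ} (hρ : 0 < ρ) :
    IntegrableOn (fun γ : ℝ => γ * rsPDF m K ρ γ) (Set.Ioi 0) := by
  have hexpand : (fun γ : ℝ => γ * rsPDF m K ρ γ) = fun γ => ∑ n ∈ range m,
      Bcoef m K n / (ρ ^ (m - n) * ((m - n - 1).factorial : ℝ)) *
        (γ ^ (m - n - 1 + 1) * exp (-γ / ρ)) := by
    ext γ
    rw [rsPDF, mul_sum]
    exact sum_congr rfl fun n _ => by rw [pow_succ]; ring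
  rw [hexpand]
  exact integrable_finsetSum _ fun n _ =>
    (integrableOn_pow_mul_exp_neg_div _ hρ).const_mul _

lemma integrableOn_mul_arsPDF (p : ℝ) (m : ℕ) (K₁ K₂ : ℝ) {ρ₁ ρ₂ : ℝ} (hρ₁ : 0 < ρ₁)
    (hρ₂ : 0 < ρ₂) :
    IntegrableOn (fun γ : ℝ => γ * arsPDF p m K₁ K₂ ρ₁ ρ₂ γ) (Set.Ioi 0) := by
  have hexpand : (fun γ : ℝ => γ * arsPDF p m K₁ K₂ ρ₁ ρ₂ γ) =
      fun γ => p * (γ * rsPDF m K₁ ρ₁ γ) + (1 - p) * (γ * rsPDF m K₂ ρ₂ γ) := by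
    ext γ; rw [arsPDF]; ring
  rw [hexpand]
  exact ((integrableOn_mul_rsPDF m K₁ hρ₁).const_mul _).add
    ((integrableOn_mul_rsPDF m K₂ hρ₂).const_mul _)

lemma norm_integral_log_one_add_mul_mul_le {f F : ℝ → ℝ} {C : ℝ}
    (hf : IntegrableOn (fun γ => γ * f γ) (Set.Ioi 0)) (hF : ∀ γ, 0 < γ → |F γ| ≤ C) :
    ‖∫ γ in Set.Ioi 0, log (1 + γ) * f γ * F γ‖ ≤ C * ∫ γ in Set.Ioi 0, |γ * f γ| := by
  rw [← integral_const_mul]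
  refine norm_integral_le_of_norm_le (hf.norm.const_mul C) ?_
  filter_upwards [ae_restrict_mem measurableSet_Ioi] with γ (hγ : 0 < γ)
  have hlog : |log (1 + γ)| ≤ γ := by
    rw [abs_of_nonneg (log_nonneg (by linarith))]
    linarith [log_le_sub_one_of_pos (show 0 < 1 + γ by linarith)]
  calc ‖log (1 + γ) * f γ * F γ‖ = |log (1 + γ)| * |f γ| * |F γ| := by
        rw [norm_eq_abs, abs_mul, abs_mul]
    _ ≤ γ * |f γ| * C := by gcongr; exact hF γ hγ
    _ = C * ‖γ * f γ‖ := by rw [norm_eq_abs, abs_mul, abs_of_pos hγ]; ring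

lemma tendsto_integral_log_one_add_mul_mul_div_logb {f : ℝ → ℝ} {F : ℝ → ℝ → ℝ}
    (hf : IntegrableOn (fun γ => γ * f γ) (Set.Ioi 0))
    (hF : ∃ C, ∀ᶠ s in atTop, ∀ γ, 0 < γ → |F s γ| ≤ C) :
    Tendsto (fun s => (∫ γ in Set.Ioi 0, log (1 + γ) * f γ * F s γ) / logb 2 s) atTop (nhds 0) := by
  obtain ⟨C, hF⟩ := hF
  refine squeeze_zero_norm' ?_ <|
    (tendsto_const_nhds (x := C * ∫ γ in Set.Ioi 0, |γ * f γ|)).div_atTop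
      (tendsto_logb_atTop one_lt_two)
  filter_upwards [hF, eventually_gt_atTop 1] with s hFs hs
  have hlogb : 0 ≤ logb 2 s := (logb_pos one_lt_two hs).le
  rw [norm_div, norm_of_nonneg hlogb]
  exact div_le_div_of_nonneg_right (norm_integral_log_one_add_mul_mul_le hf hFs) hlogb

theorem asc_slope_component_I2_general (mB mE : ℕ)
    (KB1 KB2 KE1 KE2 : ℝ)
    (ρE1 ρE2 c1 c2 : ℝ) (hρE1 : 0 < ρE1) (hρE2 : 0 < ρE2)
    (hc1 : 0 < c1) (hc2 : 0 < c2)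
    (pB pE : ℝ) :
    Filter.Tendsto
      (fun s : ℝ =>
        (∫ γ in Set.Ioi (0 : ℝ),
            Real.log (1 + γ) * arsPDF pE mE KE1 KE2 ρE1 ρE2 γ *
              arsCDF pB mB KB1 KB2 (c1 * s) (c2 * s) γ) / Real.logb 2 s)
      Filter.atTop (nhds 0) := by
  exact tendsto_integral_log_one_add_mul_mul_div_logb
    (integrableOn_mul_arsPDF pE mE KE1 KE2 hρE1 hρE2)
    ⟨_, (eventually_gt_atTop 0).mono fun s hs γ hγ =>
      abs_arsCDF_le pB mB KB1 KB2 (mul_pos hc1 hs) (mul_pos hc2 hs) hγ.le⟩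

/-- The component `S_{∞,2}` of the high-SNR slope of the ASC equals `0`. -/
theorem asc_slope_component_I2 (mB mE : ℕ) (hmB : 0 < mB) (hmE : 0 < mE)
    (KB1 KB2 KE1 KE2 : ℝ) (hKB1 : 0 < KB1) (hKB2 : 0 < KB2)
    (hKE1 : 0 < KE1) (hKE2 : 0 < KE2)
    (ρE1 ρE2 c1 c2 : ℝ) (hρE1 : 0 < ρE1) (hρE2 : 0 < ρE2)
    (hc1 : 0 < c1) (hc2 : 0 < c2)
    (pB pE : ℝ) (hpB : pB ∈ Set.Icc (0 : ℝ) 1) (hpE : pE ∈ Set.Icc (0 : ℝ) 1) :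
    Filter.Tendsto
      (fun s : ℝ =>
        (∫ γ in Set.Ioi (0 : ℝ),
            Real.log (1 + γ) * arsPDF pE mE KE1 KE2 ρE1 ρE2 γ *
              arsCDF pB mB KB1 KB2 (c1 * s) (c2 * s) γ) / Real.logb 2 s)
      Filter.atTop (nhds 0) :=
  asc_slope_component_I2_general mB mE KB1 KB2 KE1 KE2 ρE1 ρE2 c1 c2 hρE1 hρE2 hc1 hc2 pB pE
end
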